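/- For a Nash equilibrium f, a star A of the Delaunay triangulation with maximal cell radius r, and W the sum of Voronoi cells of players in A, the restricted cost satisfies cost_W(f) >= r(r-1)/(2k). -/

import Mathlib

open Finset
open scoped Classical

noncomputable def cell {V : Type*} [Fintype V] (G : SimpleGraph V) {k : ℕ}
    (f : Fin k → V) (i : Fin k) (v : V) : ℚ :=
  if G.edist v (f i) = ⨅ j, G.edist v (f j) then
    (1 : ℚ) / (Finset.univ.filter fun j => G.edist v (f j) = ⨅ j', G.edist v (f j')).card
  else 0

noncomputable def payoff {V : Type*} [Fintype V] (G : SimpleGraph V) {k : ℕ}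
    (f : Fin k → V) (i : Fin k) : ℚ :=
  ∑ v, cell G f i v

def IsNashEq {V : Type*} [Fintype V] (G : SimpleGraph V) {k : ℕ} (f : Fin k → V) : Prop :=
  ∀ (i : Fin k) (x : V), payoff G (Function.update f i x) i ≤ payoff G f i

/-- The radius of the Voronoi cell of player `i`: the largest distance from `f i` to a
vertex fractionally assigned to player `i`. -/
noncomputable def cellRadius {V : Type*} [Fintype V] (G : SimpleGraph V) {k : ℕ}
    (f : Fin k → V) (i : Fin k) : ℕ :=
  (Finset.univ.filter fun v => 0 < cell G f i v).sup fun v => (G.edist v (f i)).toNat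

/-- The Delaunay triangulation of a strategy profile: the graph on the players where
`i` and `j` are adjacent if their Voronoi cells share a vertex, or contain two
adjacent vertices respectively. -/
noncomputable def delaunay {V : Type*} [Fintype V] (G : SimpleGraph V) {k : ℕ}
    (f : Fin k → V) : SimpleGraph (Fin k) where
  Adj i j := i ≠ j ∧
    ((∃ v, 0 < cell G f i v ∧ 0 < cell G f j v) ∨
      ∃ v v', G.Adj v v' ∧ 0 < cell G f i v ∧ 0 < cell G f j v')
  symm := by
    constructor
    rintro i j ⟨hne, ⟨v, h1, h2⟩ | ⟨v, v', hvv, h1, h2⟩⟩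
    · exact ⟨hne.symm, Or.inl ⟨v, h2, h1⟩⟩
    · exact ⟨hne.symm, Or.inr ⟨v', v, hvv.symm, h2, h1⟩⟩
  loopless := by constructor; rintro i ⟨h, -⟩; exact h rfl

/-- A star in a graph: a vertex set of size at least 2 with a center adjacent to
all other vertices of the set. -/
def IsStar {V : Type*} [DecidableEq V] (G : SimpleGraph V) (A : Finset V) : Prop :=
  2 ≤ A.card ∧ ∃ v0 ∈ A, ∀ v ∈ A, v ≠ v0 → G.Adj v0 v

/-- The cost of a profile restricted to a nonnegative weight vector `W`. -/
noncomputable def costW {V : Type*} [Fintype V] (G : SimpleGraph V) (W : V → ℚ)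
    {k : ℕ} (f : Fin k → V) : ℚ :=
  ∑ v, W v * ((⨅ i, G.edist v (f i)).toNat : ℚ)

/-
Take a player `i₀ ∈ A` whose cell has the maximal radius `r`, and a vertex `v₀` of that cell
at distance `r` from `f i₀`. Since `f i₀` is a nearest facility of `v₀`, every vertex at
distance `t` from `f i₀` on a shortest path to `v₀` has `f i₀` as a nearest facility too, at
distance exactly `t`: a closer facility would be closer to `v₀` as well. So that vertex carries
weight at least `1/k` in the cell of `i₀`, and these `r` vertices alone contribute
`(0 + 1 + ⋯ + (r-1))/k`.
-/

namespace SimpleGraph.Walk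

variable {V : Type*} {G : SimpleGraph V} {u v : V}

lemma edist_le_getVert (p : G.Walk u v) (t : ℕ) : G.edist u (p.getVert t) ≤ t :=
  (p.take t).edist_le.trans <| by rw [take_length]; exact_mod_cast min_le_left t p.length

lemma edist_getVert_le (p : G.Walk u v) (t : ℕ) :
    G.edist (p.getVert t) v ≤ (p.length - t : ℕ) :=
  (p.drop t).edist_le.trans_eq <| by rw [drop_length]

end SimpleGraph.Walk

section Facility

variable {V : Type*} {G : SimpleGraph V} {k : ℕ} {f : Fin k → V}

lemma iInf_edist_getVert_eq {i : Fin k} {v : V} (hv : G.edist v (f i) = ⨅ j, G.edist v (f j))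
    (p : G.Walk (f i) v) (hp : G.edist v (f i) = p.length) {t : ℕ} (ht : t ≤ p.length) :
    ⨅ j, G.edist (p.getVert t) (f j) = t ∧ G.edist (p.getVert t) (f i) = t := by
  have hi : G.edist (p.getVert t) (f i) ≤ t := by
    rw [SimpleGraph.edist_comm]; exact p.edist_le_getVert t
  have hlower : (t : ℕ∞) ≤ ⨅ j, G.edist (p.getVert t) (f j) := by
    refine le_iInf fun j => ?_
    have hj : (p.length : ℕ∞) ≤ (p.length - t : ℕ) + G.edist (p.getVert t) (f j) :=
      calc (p.length : ℕ∞) = ⨅ j, G.edist v (f j) := hp.symm.trans hv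
        _ ≤ G.edist v (f j) := iInf_le _ j
        _ ≤ G.edist v (p.getVert t) + G.edist (p.getVert t) (f j) := G.edist_triangle
        _ ≤ (p.length - t : ℕ) + G.edist (p.getVert t) (f j) := by
          rw [SimpleGraph.edist_comm]; gcongr; exact p.edist_getVert_le t
    cases h : G.edist (p.getVert t) (f j) with
    | top => exact le_top
    | coe d =>
      rw [h] at hj
      have hj' : p.length ≤ p.length - t + d := by exact_mod_cast hj
      exact_mod_cast (by omega : t ≤ d)
  exact ⟨le_antisymm ((iInf_le (fun j => G.edist (p.getVert t) (f j)) i).trans hi) hlower,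
    le_antisymm hi (hlower.trans (iInf_le _ i))⟩

end Facility

section Voronoi

variable {V : Type*} [Fintype V] {G : SimpleGraph V} {k : ℕ} {f : Fin k → V}

lemma cell_nonneg (i : Fin k) (v : V) : 0 ≤ cell G f i v := by
  unfold cell; split <;> positivity

lemma edist_eq_iInf_of_cell_pos {i : Fin k} {v : V} (h : 0 < cell G f i v) :
    G.edist v (f i) = ⨅ j, G.edist v (f j) := by
  by_contra hc
  rw [cell, if_neg hc] at h
  exact h.false

lemma inv_le_cell {i : Fin k} {v : V} (h : G.edist v (f i) = ⨅ j, G.edist v (f j)) :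
    (k : ℚ)⁻¹ ≤ cell G f i v := by
  rw [cell, if_pos h, one_div]
  set nearest := univ.filter fun j => G.edist v (f j) = ⨅ j', G.edist v (f j')
  have hpos : 0 < (#nearest : ℚ) := by
    exact_mod_cast card_pos.mpr ⟨i, by simp [nearest, h]⟩
  have hle : (#nearest : ℚ) ≤ k := by
    exact_mod_cast (card_filter_le _ _).trans_eq (card_fin k)
  exact inv_anti₀ hpos hle

lemma exists_cell_pos_edist_eq_cellRadius {i : Fin k} (h : cellRadius G f i ≠ 0) :
    ∃ v, 0 < cell G f i v ∧ G.edist v (f i) = cellRadius G f i := by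
  have hne : (univ.filter fun v => 0 < cell G f i v).Nonempty := by
    by_contra hempty
    rw [not_nonempty_iff_eq_empty] at hempty
    simp [cellRadius, hempty] at h
  obtain ⟨v, hv, hsup⟩ := exists_mem_eq_sup _ hne fun v => (G.edist v (f i)).toNat
  rw [← cellRadius] at hsup
  refine ⟨v, (mem_filter.mp hv).2, ?_⟩
  rw [hsup] at h ⊢
  exact (ENat.natCast_toNat (fun htop => h (by rw [htop, ENat.toNat_top]))).symm

end Voronoi

section Cost

variable {V : Type*} [Fintype V] {G : SimpleGraph V} {k : ℕ} {f : Fin k → V}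

lemma costW_mono {W W' : V → ℚ} (h : W ≤ W') : costW G W f ≤ costW G W' f :=
  sum_le_sum fun v _ => by gcongr; exact h v

lemma costW_nonneg {W : V → ℚ} (h : 0 ≤ W) : 0 ≤ costW G W f :=
  sum_nonneg fun v _ => mul_nonneg (h v) (Nat.cast_nonneg _)

lemma sum_range_div_le_costW_cell {i : Fin k} {v : V} (hv : 0 < cell G f i v) {ρ : ℕ}
    (hρ : G.edist v (f i) = ρ) :
    ∑ t ∈ range ρ, (t : ℚ) / k ≤ costW G (cell G f i) f := by
  obtain ⟨p, hp⟩ := SimpleGraph.exists_walk_of_edist_eq_coe (G.edist_comm.trans hρ)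
  have hnear : ∀ t ∈ range ρ,
      ⨅ j, G.edist (p.getVert t) (f j) = t ∧ G.edist (p.getVert t) (f i) = t := fun t ht =>
    iInf_edist_getVert_eq (edist_eq_iInf_of_cell_pos hv) p (by rw [hρ, hp])
      (hp ▸ (mem_range.mp ht).le)
  have hinj : Set.InjOn p.getVert (range ρ) := fun s hs t ht hst => by
    exact_mod_cast (hnear s hs).1.symm.trans (hst ▸ (hnear t ht).1)
  calc ∑ t ∈ range ρ, (t : ℚ) / k
      ≤ ∑ t ∈ range ρ,
          cell G f i (p.getVert t) * ((⨅ j, G.edist (p.getVert t) (f j)).toNat : ℚ) :=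
        sum_le_sum fun t ht => by
          obtain ⟨hinf, hdist⟩ := hnear t ht
          rw [hinf, ENat.toNat_natCast, div_eq_inv_mul]
          gcongr
          exact inv_le_cell (hdist.trans hinf.symm)
    _ = ∑ u ∈ (range ρ).image p.getVert,
          cell G f i u * ((⨅ j, G.edist u (f j)).toNat : ℚ) := by
        rw [sum_image hinj]
    _ ≤ costW G (cell G f i) f :=
        sum_le_sum_of_subset_of_nonneg (subset_univ _) fun u _ _ =>
          mul_nonneg (cell_nonneg i u) (Nat.cast_nonneg _)

end Cost

lemma sum_range_natCast_div (ρ k : ℕ) :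
    ∑ t ∈ range ρ, (t : ℚ) / k = ρ * (ρ - 1) / (2 * k) := by
  induction ρ with
  | zero => simp
  | succ n ih => rw [sum_range_succ, ih]; push_cast; ring

theorem stmt17_general {V : Type*} [Fintype V] (G : SimpleGraph V)
    (k : ℕ)
    (f : Fin k → V)
    (A : Finset (Fin k))
    (r : ℕ) (hr : r = A.sup fun i => cellRadius G f i)
    (W : V → ℚ) (hW : W = fun v => ∑ i ∈ A, cell G f i v) :
    (r : ℚ) * ((r : ℚ) - 1) / (2 * k) ≤ costW G W f := by
  have hW_nonneg : 0 ≤ W := hW ▸ fun v => sum_nonneg fun i _ => cell_nonneg i v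
  have hcell_le_W : ∀ i ∈ A, cell G f i ≤ W := fun i hi v => by
    rw [hW]; exact single_le_sum (fun j _ => cell_nonneg j v) hi
  obtain rfl | hr0 := eq_or_ne r 0
  · simpa using costW_nonneg (G := G) (f := f) hW_nonneg
  obtain ⟨i₀, hi₀, hri₀⟩ := exists_mem_eq_sup A
    (nonempty_iff_ne_empty.mpr fun h => hr0 (by simp [hr, h])) fun i => cellRadius G f i
  obtain ⟨v₀, hv₀, hdist⟩ := exists_cell_pos_edist_eq_cellRadius (hri₀ ▸ hr ▸ hr0)
  calc (r : ℚ) * ((r : ℚ) - 1) / (2 * k)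
      = ∑ t ∈ range r, (t : ℚ) / k := (sum_range_natCast_div r k).symm
    _ ≤ costW G (cell G f i₀) f := sum_range_div_le_costW_cell hv₀ (hr ▸ hri₀ ▸ hdist)
    _ ≤ costW G W f := costW_mono (hcell_le_W i₀ hi₀)

/-- For a Nash equilibrium `f`, a star `A` of the Delaunay triangulation with maximal
cell radius `r`, and `W` the sum of the Voronoi cells of the players of `A`, the
restricted cost satisfies `cost_W(f) ≥ r(r-1)/(2k)`. -/
theorem stmt17 {V : Type*} [Fintype V] [DecidableEq V] (G : SimpleGraph V)
    (hG : G.Connected) (k : ℕ) (hk : 0 < k) (hkn : k < Fintype.card V)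
    (f : Fin k → V) (hf : IsNashEq G f)
    (A : Finset (Fin k)) (hA : IsStar (delaunay G f) A)
    (r : ℕ) (hr : r = A.sup fun i => cellRadius G f i)
    (W : V → ℚ) (hW : W = fun v => ∑ i ∈ A, cell G f i v) :
    (r : ℚ) * ((r : ℚ) - 1) / (2 * k) ≤ costW G W f :=
  stmt17_general G k f A r hr W hW
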